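/- arXiv:math/0111010 — 3 statements merged into one kernel-verified Lean document; each statement's English description precedes it below -/
import Mathlib

section
/- Let R̊ be an irreducible finite root system with two root lengths whose squared-length ratio p satisfies p ∈ {2,3}, with highest root θ and highest short root θ_s. Then every positive root α ∈ Π(s_{θ−θ_s}) with α ≠ θ−θ_s satisfies ⟨θ−θ_s, α^∨⟩ = 1 (in particular, for p=2 every such α is long). -/
open scoped RealInnerProductSpace

namespace Paper

variable {V : Type*} [NormedAddCommGroup V] [InnerProductSpace ℝ V]

/-- The reflection in the vector `α` (with respect to the real inner product). -/
noncomputable def refl (α x : V) : V := x - (2 * ⟪x, α⟫ / ⟪α, α⟫) • α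

/-- A (reduced, irreducible, crystallographic) finite root system realized in a
real inner product space. -/
structure RootSystemData (V : Type*) [NormedAddCommGroup V] [InnerProductSpace ℝ V] where
  roots : Finset V
  ne_zero : ∀ α ∈ roots, α ≠ (0 : V)
  neg_mem : ∀ α ∈ roots, -α ∈ roots
  reflect_mem : ∀ α ∈ roots, ∀ β ∈ roots, refl α β ∈ roots
  cartan_int : ∀ α ∈ roots, ∀ β ∈ roots, ∃ k : ℤ, (k : ℝ) = 2 * ⟪β, α⟫ / ⟪α, α⟫
  reduced : ∀ α ∈ roots, ∀ t : ℝ, t • α ∈ roots → t = 1 ∨ t = -1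
  irreducible : ∀ S : Finset V, S ⊆ roots →
    (∀ α ∈ S, ∀ β ∈ roots, β ∉ S → ⟪α, β⟫ = 0) → S = ∅ ∨ S = roots

namespace RootSystemData

variable (R : RootSystemData V)

/-- A root of minimal length. -/
def IsShortRoot (α : V) : Prop := α ∈ R.roots ∧ ∀ β ∈ R.roots, ⟪α, α⟫ ≤ ⟪β, β⟫

/-- A root of maximal length. -/
def IsLongRoot (α : V) : Prop := α ∈ R.roots ∧ ∀ β ∈ R.roots, ⟪β, β⟫ ≤ ⟪α, α⟫

/-- The root system has exactly two root lengths. -/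
def TwoLengths : Prop := ∃ a ∈ R.roots, ∃ b ∈ R.roots, ⟪a, a⟫ ≠ ⟪b, b⟫ ∧
  ∀ c ∈ R.roots, ⟪c, c⟫ = ⟪a, a⟫ ∨ ⟪c, c⟫ = ⟪b, b⟫

/-- A linear functional determining a system of positive roots. -/
def IsRegular (f : V →ₗ[ℝ] ℝ) : Prop := ∀ α ∈ R.roots, f α ≠ 0

/-- `θ` is the highest root for the positive system determined by `f`:
the dominant long positive root, which moreover dominates every positive root. -/
def IsHighestRoot (f : V →ₗ[ℝ] ℝ) (θ : V) : Prop :=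
  R.IsLongRoot θ ∧ 0 < f θ ∧ ∀ α ∈ R.roots, 0 < f α → f α ≤ f θ ∧ 0 ≤ ⟪θ, α⟫

/-- `θs` is the highest short root for the positive system determined by `f`. -/
def IsHighestShortRoot (f : V →ₗ[ℝ] ℝ) (θs : V) : Prop :=
  R.IsShortRoot θs ∧ 0 < f θs ∧
    ∀ α ∈ R.roots, 0 < f α → (R.IsShortRoot α → f α ≤ f θs) ∧ 0 ≤ ⟪θs, α⟫

/-- The inversion set `Π(w)` of `w`: positive roots sent to negative roots. -/
def inversions (f : V →ₗ[ℝ] ℝ) (w : V → V) : Set V :=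
  {α | α ∈ R.roots ∧ 0 < f α ∧ f (w α) < 0}

/-- `Δ` is the base (set of simple roots) of the positive system determined by `f`. -/
def IsBase (f : V →ₗ[ℝ] ℝ) (Δ : Set V) : Prop :=
  Δ ⊆ R.roots ∧ (∀ a ∈ Δ, 0 < f a) ∧
    ∀ α ∈ R.roots, 0 < f α → α ∈ AddSubmonoid.closure Δ

end RootSystemData

/-- The product of the reflections in the listed vectors, leftmost acting last...
`wordProd [a₁, …, aₚ] = s_{a₁} ∘ ⋯ ∘ s_{aₚ}`. -/
noncomputable def wordProd (L : List V) : V → V := L.foldr (fun a g => refl a ∘ g) id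

/-- Membership in the (finite) Weyl group generated by the reflections in elements of `Δ`. -/
def InWeylWords (Δ : Set V) (w : V → V) : Prop :=
  ∃ L : List V, (∀ a ∈ L, a ∈ Δ) ∧ wordProd L = w

/-- Coxeter length with respect to the simple reflections in elements of `Δ`. -/
noncomputable def len (Δ : Set V) (w : V → V) : ℕ :=
  sInf {m | ∃ L : List V, (∀ a ∈ L, a ∈ Δ) ∧ L.length = m ∧ wordProd L = w}

/-- The translation by `μ` (level-one action of `λ_μ`). -/
def transl (μ : V) : V → V := fun x => x + μ

/-- The affine simple reflection `s₀` (level-one action): `s₀(x) = s_θ(x) + θ`. -/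
noncomputable def s0 (θ : V) : V → V := fun x => refl θ x + θ

/-- The affine simple reflections `s₀, s₁, …, sₙ`. -/
def affSimples (Δ : Set V) (θ : V) : Set (V → V) :=
  {g | (∃ a ∈ Δ, g = refl a) ∨ g = s0 θ}

/-- Membership in the affine Weyl group. -/
def InAffWords (Δ : Set V) (θ : V) (w : V → V) : Prop :=
  ∃ L : List (V → V), (∀ g ∈ L, g ∈ affSimples Δ θ) ∧ L.foldr (· ∘ ·) id = w

/-- Coxeter length in the affine Weyl group. -/
noncomputable def alen (Δ : Set V) (θ : V) (w : V → V) : ℕ :=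
  sInf {m | ∃ L : List (V → V), (∀ g ∈ L, g ∈ affSimples Δ θ) ∧ L.length = m ∧
    L.foldr (· ∘ ·) id = w}

end Paper

namespace PaperAux

open Paper

variable {V : Type*} [NormedAddCommGroup V] [InnerProductSpace ℝ V]

/-- Chains of pairwise non-orthogonal roots ending at `e`. -/
def chainTo (roots : Finset V) (e : V) : ℕ → V → Prop
  | 0, x => x = e
  | n + 1, x => ∃ y ∈ roots, ⟪x, y⟫ ≠ 0 ∧ chainTo roots e n y

lemma chainTo_zero {roots : Finset V} {e x : V} : chainTo roots e 0 x ↔ x = e := Iff.rfl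

lemma chainTo_succ {roots : Finset V} {e x : V} {n : ℕ} :
    chainTo roots e (n + 1) x ↔ ∃ y ∈ roots, ⟪x, y⟫ ≠ 0 ∧ chainTo roots e n y := Iff.rfl

variable (R : RootSystemData V)

lemma root_inner_self_pos {x : V} (hx : x ∈ R.roots) : 0 < ⟪x, x⟫ :=
  lt_of_le_of_ne real_inner_self_nonneg
    (fun hc => (R.ne_zero x hx) (inner_self_eq_zero.1 hc.symm))

lemma cartan {x y : V} (hx : x ∈ R.roots) (hy : y ∈ R.roots) :
    ∃ k : ℤ, 2 * ⟪y, x⟫ = (k : ℝ) * ⟪x, x⟫ := by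
  obtain ⟨k, hk⟩ := R.cartan_int x hx y hy
  refine ⟨k, ?_⟩
  have hxx : ⟪x, x⟫ ≠ 0 := (root_inner_self_pos R hx).ne'
  field_simp at hk
  linarith [hk]

lemma cs_strict {x y : V} (hx : x ∈ R.roots) (hy : y ∈ R.roots)
    (h1 : y ≠ x) (h2 : y ≠ -x) : ⟪x, y⟫ ^ 2 < ⟪x, x⟫ * ⟪y, y⟫ := by
  have hle := real_inner_mul_inner_self_le x y
  rcases lt_or_eq_of_le hle with h | h
  · rw [sq]; exact h
  · exfalso
    have hxx := root_inner_self_pos R hx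
    set z : V := ⟪x, x⟫ • y - ⟪x, y⟫ • x with hzdef
    have hzz : ⟪z, z⟫ = ⟪x, x⟫ * (⟪x, x⟫ * ⟪y, y⟫ - ⟪x, y⟫ * ⟪x, y⟫) := by
      simp only [hzdef, inner_sub_left, inner_sub_right, real_inner_smul_left,
        real_inner_smul_right]
      rw [real_inner_comm y x]; ring
    rw [← h, sub_self, mul_zero] at hzz
    have hz0 : z = 0 := inner_self_eq_zero.1 hzz
    have hxy : ⟪x, x⟫ • y = ⟪x, y⟫ • x := by rwa [sub_eq_zero] at hz0
    have hy' : y = (⟪x, x⟫⁻¹ * ⟪x, y⟫) • x := by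
      rw [mul_smul, ← hxy, inv_smul_smul₀ hxx.ne']
    rcases R.reduced x hx _ (hy' ▸ hy) with hr | hr
    · exact h1 (by rw [hy', hr, one_smul])
    · exact h2 (by rw [hy', hr, neg_one_smul])

/-- If two distinct roots have positive inner product, their difference is a root. -/
lemma sub_root {x y : V} (hx : x ∈ R.roots) (hy : y ∈ R.roots)
    (hpos : 0 < ⟪x, y⟫) (hne : x ≠ y) : x - y ∈ R.roots := by
  have hyx : y ≠ -x := by
    rintro rfl
    rw [inner_neg_right] at hpos
    linarith [root_inner_self_pos R hx]
  have hxx := root_inner_self_pos R hx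
  have hyy := root_inner_self_pos R hy
  have hcomm : ⟪y, x⟫ = ⟪x, y⟫ := real_inner_comm x y
  obtain ⟨k1, hk1⟩ := cartan R hx hy
  obtain ⟨k2, hk2⟩ := cartan R hy hx
  have hk1r : 0 < (k1 : ℝ) := by nlinarith
  have hk2r : 0 < (k2 : ℝ) := by nlinarith
  have hk1z : 1 ≤ k1 := by exact_mod_cast hk1r
  have hk2z : 1 ≤ k2 := by exact_mod_cast hk2r
  have hcs := cs_strict R hx hy hne.symm hyx
  have hprod : ((k1 : ℝ) * (k2 : ℝ)) * (⟪x, x⟫ * ⟪y, y⟫) = 4 * ⟪x, y⟫ ^ 2 := by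
    have : (2 * ⟪y, x⟫) * (2 * ⟪x, y⟫) = ((k1 : ℝ) * ⟪x, x⟫) * ((k2 : ℝ) * ⟪y, y⟫) := by
      rw [hk1, hk2]
    rw [hcomm] at this
    nlinarith [this]
  have hlt : ((k1 : ℝ) * (k2 : ℝ)) * (⟪x, x⟫ * ⟪y, y⟫) < 4 * (⟪x, x⟫ * ⟪y, y⟫) := by
    rw [hprod]; nlinarith
  have hk12 : (k1 : ℝ) * (k2 : ℝ) < 4 :=
    lt_of_mul_lt_mul_right (by nlinarith) (by positivity)
  have hk12z : k1 * k2 < 4 := by exact_mod_cast hk12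
  have hone : k1 = 1 ∨ k2 = 1 := by
    by_contra hcon
    push_neg at hcon
    have h1 : 2 ≤ k1 := by omega
    have h2 : 2 ≤ k2 := by omega
    nlinarith
  rcases hone with h | h
  · -- refl x y = y - x
    have hscal : 2 * ⟪y, x⟫ / ⟪x, x⟫ = 1 := by
      rw [hk1, h]; push_cast; field_simp
    have hmem := R.reflect_mem x hx y hy
    have : Paper.refl x y = y - x := by
      simp only [Paper.refl, hscal, one_smul]
    rw [this] at hmem
    have := R.neg_mem _ hmem
    rwa [neg_sub] at this
  · -- refl y x = x - y
    have hscal : 2 * ⟪x, y⟫ / ⟪y, y⟫ = 1 := by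
      rw [hk2, h]; push_cast; field_simp
    have hmem := R.reflect_mem y hy x hx
    have : Paper.refl y x = x - y := by
      simp only [Paper.refl, hscal, one_smul]
    rwa [this] at hmem

lemma exists_chainTo {e x : V} (he : e ∈ R.roots) (hx : x ∈ R.roots) :
    ∃ n, chainTo R.roots e n x := by
  classical
  set S := R.roots.filter (fun z => ∃ n, chainTo R.roots e n z) with hS
  have hsub : S ⊆ R.roots := Finset.filter_subset _ _
  have horth : ∀ a ∈ S, ∀ b ∈ R.roots, b ∉ S → ⟪a, b⟫ = 0 := by
    intro a ha b hb hbS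
    by_contra hab
    refine hbS (Finset.mem_filter.2 ⟨hb, ?_⟩)
    obtain ⟨n, hn⟩ := (Finset.mem_filter.1 ha).2
    exact ⟨n + 1, chainTo_succ.2 ⟨a, (Finset.mem_filter.1 ha).1,
      by rwa [real_inner_comm], hn⟩⟩
  rcases R.irreducible S hsub horth with h | h
  · exfalso
    have : e ∈ S := Finset.mem_filter.2 ⟨he, 0, rfl⟩
    rw [h] at this
    exact Finset.notMem_empty e this
  · have : x ∈ S := by rw [h]; exact hx
    exact (Finset.mem_filter.1 this).2

lemma theta_inner_thetas
    (f : V →ₗ[ℝ] ℝ) (θ θs : V) (p : ℝ)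
    (hp2 : 2 ≤ p)
    (hreg : R.IsRegular f)
    (hθ : R.IsHighestRoot f θ) (hnorm : ⟪θ, θ⟫ = 2)
    (hθs : R.IsHighestShortRoot f θs)
    (hss : ⟪θs, θs⟫ = 2 / p) :
    ⟪θ, θs⟫ = 1 := by
  have hppos : (0 : ℝ) < p := by linarith
  have hsle : 2 / p ≤ 1 := by rw [div_le_one hppos]; linarith
  have hθmem := hθ.1.1
  have hθsmem := hθs.1.1
  have hfθ := hθ.2.1
  have hfθs := hθs.2.1
  have hθsneθ : θs ≠ θ := by
    intro h
    rw [h, hnorm] at hss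
    linarith
  have hθsnenegθ : θs ≠ -θ := by
    intro h
    rw [h, map_neg] at hfθs
    linarith
  -- the key non-orthogonality
  have hz : ⟪θ, θs⟫ ≠ 0 := by
    intro hz
    have hzc : ⟪θs, θ⟫ = 0 := by rw [real_inner_comm]; exact hz
    have key : ∀ δ ∈ R.roots, 0 < f δ → ⟪θ, δ⟫ ≠ 0 → ⟪δ, θs⟫ ≠ 0 → False := by
      intro δ hδ hfδ h1 h2
      have hdom := hθ.2.2 δ hδ hfδ
      have h3 : 0 < ⟪θ, δ⟫ := lt_of_le_of_ne hdom.2 (Ne.symm h1)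
      have hδθ : δ ≠ θ := by
        rintro rfl
        exact h2 ((real_inner_comm θs δ).trans hzc)
      have hroot : θ - δ ∈ R.roots := sub_root R hθmem hδ h3 (Ne.symm hδθ)
      have hfpos : 0 < f (θ - δ) := by
        have hne := hreg _ hroot
        have : f (θ - δ) = f θ - f δ := map_sub f θ δ
        rcases lt_or_ge 0 (f (θ - δ)) with h | h
        · exact h
        · exfalso
          rcases lt_or_eq_of_le h with h' | h'
          · linarith [hdom.1]
          · exact hne h'
      have h4 := (hθs.2.2 _ hroot hfpos).2
      rw [inner_sub_right, hzc] at h4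
      have h5 := (hθs.2.2 δ hδ hfδ).2
      have : ⟪θs, δ⟫ = 0 := le_antisymm (by linarith) h5
      exact h2 (by rw [real_inner_comm]; exact this)
    obtain ⟨n0, hn0⟩ := exists_chainTo R hθsmem hθmem
    have hex : ∃ n, chainTo R.roots θs n θ := ⟨n0, hn0⟩
    classical
    obtain ⟨N, hNchain, hNmin⟩ :
        ∃ N, chainTo R.roots θs N θ ∧ ∀ m, m < N → ¬chainTo R.roots θs m θ :=
      ⟨Nat.find hex, Nat.find_spec hex, fun m hm => Nat.find_min hex hm⟩
    rcases N with _ | _ | _ | m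
    · exact hθsneθ (chainTo_zero.1 hNchain).symm
    · obtain ⟨y, hy, hne, hy0⟩ := chainTo_succ.1 hNchain
      rw [chainTo_zero] at hy0
      subst hy0
      exact hne hz
    · obtain ⟨γ, hγ, h1, hc⟩ := chainTo_succ.1 hNchain
      obtain ⟨y, hy, h2', hy0⟩ := chainTo_succ.1 hc
      rw [chainTo_zero] at hy0
      subst hy0
      rcases (hreg γ hγ).lt_or_gt with hneg | hpos
      · refine key (-γ) (R.neg_mem γ hγ) (by rw [map_neg]; linarith) ?_ ?_
        · rw [inner_neg_right]; simpa using h1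
        · rw [inner_neg_left]; simpa using h2'
      · exact key γ hγ hpos h1 h2'
    · obtain ⟨γ1, hγ1, h01, hc1⟩ := chainTo_succ.1 hNchain
      obtain ⟨γ2, hγ2, h12, hc2⟩ := chainTo_succ.1 hc1
      obtain ⟨γ3, hγ3, h23, hc3⟩ := chainTo_succ.1 hc2
      have hθ2 : ⟪θ, γ2⟫ = 0 := by
        by_contra h
        exact hNmin (m + 2) (by omega)
          (chainTo_succ.2 ⟨γ2, hγ2, h, chainTo_succ.2 ⟨γ3, hγ3, h23, hc3⟩⟩)
      have h13 : ⟪γ1, γ3⟫ = 0 := by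
        by_contra h
        exact hNmin (m + 2) (by omega)
          (chainTo_succ.2 ⟨γ1, hγ1, h01, chainTo_succ.2 ⟨γ3, hγ3, h, hc3⟩⟩)
      have hne12 : γ1 ≠ γ2 := by
        rintro rfl
        exact h01 hθ2
      have hne12' : γ1 ≠ -γ2 := by
        intro h
        apply h01
        rw [h, inner_neg_right, hθ2, neg_zero]
      rcases h12.lt_or_gt with hneg | hpos
      · have hmem : γ1 - -γ2 ∈ R.roots :=
          sub_root R hγ1 (R.neg_mem γ2 hγ2) (by rw [inner_neg_right]; linarith) hne12'
        rw [sub_neg_eq_add] at hmem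
        refine hNmin (m + 2) (by omega)
          (chainTo_succ.2 ⟨γ1 + γ2, hmem, ?_, chainTo_succ.2 ⟨γ3, hγ3, ?_, hc3⟩⟩)
        · rw [inner_add_right, hθ2, add_zero]; exact h01
        · rw [inner_add_left, h13, zero_add]; exact h23
      · have hmem : γ1 - γ2 ∈ R.roots := sub_root R hγ1 hγ2 hpos hne12
        refine hNmin (m + 2) (by omega)
          (chainTo_succ.2 ⟨γ1 - γ2, hmem, ?_, chainTo_succ.2 ⟨γ3, hγ3, ?_, hc3⟩⟩)
        · rw [inner_sub_right, hθ2, sub_zero]; exact h01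
        · rw [inner_sub_left, h13, zero_sub]
          exact neg_ne_zero.2 h23
  -- integrality and bound
  obtain ⟨k, hk⟩ := cartan R hθmem hθsmem
  rw [hnorm, real_inner_comm θ θs] at hk
  have hkval : ⟪θ, θs⟫ = (k : ℝ) := by linarith
  have hk0 : 0 ≤ ⟪θ, θs⟫ := (hθ.2.2 θs hθsmem hfθs).2
  have hkr : 0 < (k : ℝ) := by
    rw [← hkval]
    exact lt_of_le_of_ne hk0 (Ne.symm hz)
  have hkz : 1 ≤ k := by exact_mod_cast hkr
  have hcs := cs_strict R hθmem hθsmem hθsneθ hθsnenegθ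
  rw [hnorm, hss] at hcs
  have hlt2 : ⟪θ, θs⟫ ^ 2 < 2 := by
    have : 2 * (2 / p) ≤ 2 := by linarith
    linarith
  have hk1r : (1 : ℝ) ≤ (k : ℝ) := by exact_mod_cast hkz
  have hk2' : (k : ℝ) ^ 2 < 2 := by rw [← hkval]; exact hlt2
  have hklt : (k : ℝ) < 2 := by nlinarith [hk2', hk1r]
  have hkz2 : k < 2 := by exact_mod_cast hklt
  have : k = 1 := by omega
  rw [hkval, this]
  norm_num

lemma length_dichotomy (h2 : R.TwoLengths) {θ θs : V} {s : ℝ}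
    (hθm : θ ∈ R.roots) (hθsm : θs ∈ R.roots)
    (hnorm : ⟪θ, θ⟫ = 2) (hss : ⟪θs, θs⟫ = s) (hne : s ≠ 2) :
    ∀ c ∈ R.roots, ⟪c, c⟫ = 2 ∨ ⟪c, c⟫ = s := by
  obtain ⟨a, ha, b, hb, hab, hall⟩ := h2
  intro c hc
  rcases hall c hc with h3 | h3 <;> rcases hall θ hθm with h1 | h1 <;>
    rcases hall θs hθsm with h2' | h2' <;>
    first
      | (left; linarith)
      | (right; linarith)
      | (exact absurd (by linarith : s = 2) hne)

end PaperAux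

set_option maxHeartbeats 1600000 in
open Paper in
/-- For a two-length irreducible root system with squared-length
ratio `p ∈ {2,3}`, every positive root `α ∈ Π(s_{θ−θs})` with `α ≠ θ−θs`
satisfies `⟨θ−θs, α^∨⟩ = 1` (and for `p = 2` every such `α` is long). -/
theorem inversions_of_refl_theta_sub_thetas
    {V : Type*} [NormedAddCommGroup V] [InnerProductSpace ℝ V]
    (R : RootSystemData V) (f : V →ₗ[ℝ] ℝ) (θ θs : V) (p : ℝ)
    (h2 : R.TwoLengths) (hp : p = 2 ∨ p = 3)
    (hratio : ∀ a, R.IsLongRoot a → ∀ b, R.IsShortRoot b → ⟪a, a⟫ = p * ⟪b, b⟫)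
    (hreg : R.IsRegular f)
    (hθ : R.IsHighestRoot f θ) (hnorm : ⟪θ, θ⟫ = 2)
    (hθs : R.IsHighestShortRoot f θs) :
    ∀ α ∈ R.inversions f (refl (θ - θs)), α ≠ θ - θs →
      2 * ⟪θ - θs, α⟫ / ⟪α, α⟫ = 1 ∧ (p = 2 → R.IsLongRoot α) := by
  have hθmem := hθ.1.1
  have hθsmem := hθs.1.1
  have hfθ := hθ.2.1
  have hfθs := hθs.2.1
  have hp2 : (2 : ℝ) ≤ p := by rcases hp with h | h <;> rw [h] <;> norm_num
  have hppos : (0 : ℝ) < p := by linarith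
  have hss : ⟪θs, θs⟫ = 2 / p := by
    have h := hratio θ hθ.1 θs hθs.1
    rw [hnorm] at h
    rw [eq_div_iff hppos.ne']
    linarith
  have hsle : 2 / p ≤ 1 := by rw [div_le_one hppos]; linarith
  have hsne : (2 : ℝ) / p ≠ 2 := by linarith
  have hspos : (0 : ℝ) < 2 / p := by positivity
  have hts : ⟪θ, θs⟫ = 1 := PaperAux.theta_inner_thetas R f θ θs p hp2 hreg hθ hnorm hθs hss
  have hstheta : ⟪θs, θ⟫ = 1 := (real_inner_comm θ θs).trans hts
  have hdich := PaperAux.length_dichotomy R h2 hθmem hθsmem hnorm hss hsne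
  -- β = θ - θs is a root
  have hβmem : θ - θs ∈ R.roots := by
    have hsc : 2 * ⟪θs, θ⟫ / ⟪θ, θ⟫ = 1 := by rw [hnorm, hstheta]; norm_num
    have hreflval : Paper.refl θ θs = θs - θ := by
      simp only [Paper.refl, hsc, one_smul]
    have h1 := R.reflect_mem θ hθmem θs hθsmem
    rw [hreflval] at h1
    have := R.neg_mem _ h1
    rwa [neg_sub] at this
  have hββ : ⟪θ - θs, θ - θs⟫ = 2 / p := by
    have hexp : ⟪θ - θs, θ - θs⟫ = ⟪θ, θ⟫ - ⟪θ, θs⟫ - ⟪θ, θs⟫ + ⟪θs, θs⟫ := by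
      rw [inner_sub_left, inner_sub_right, inner_sub_right, real_inner_comm θ θs]
      ring
    rw [hexp, hnorm, hts, hss]; ring
  have hθβ : ⟪θ, θ - θs⟫ = 1 := by rw [inner_sub_right, hnorm, hts]; norm_num
  have hθsβ : ⟪θs, θ - θs⟫ = 1 - 2 / p := by
    rw [inner_sub_right, hstheta, hss]
  have hfβ : 0 < f (θ - θs) := by
    have h1 : f θs ≤ f θ := (hθ.2.2 θs hθsmem hfθs).1
    have h2' := hreg _ hβmem
    rw [map_sub] at h2' ⊢
    rcases lt_or_eq_of_le (by linarith : (0 : ℝ) ≤ f θ - f θs) with h | h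
    · exact h
    · exact absurd h.symm h2'
  intro α hα hneβ
  obtain ⟨hαmem, hfα, hinv⟩ := hα
  have hββpos : 0 < ⟪θ - θs, θ - θs⟫ := PaperAux.root_inner_self_pos R hβmem
  have hfinv : f (Paper.refl (θ - θs) α)
      = f α - (2 * ⟪α, θ - θs⟫ / ⟪θ - θs, θ - θs⟫) * f (θ - θs) := by
    simp only [Paper.refl, map_sub, map_smul, smul_eq_mul]
  rw [hfinv] at hinv
  have hcpos : 0 < 2 * ⟪α, θ - θs⟫ / ⟪θ - θs, θ - θs⟫ := by
    by_contra hle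
    push_neg at hle
    have := mul_nonpos_of_nonpos_of_nonneg hle hfβ.le
    linarith
  have hαβpos : 0 < ⟪α, θ - θs⟫ := by
    by_contra h
    push_neg at h
    have : 2 * ⟪α, θ - θs⟫ / ⟪θ - θs, θ - θs⟫ ≤ 0 :=
      div_nonpos_of_nonpos_of_nonneg (by linarith) hββpos.le
    linarith
  obtain ⟨q, hq⟩ := PaperAux.cartan R hαmem hβmem
  have hαα := PaperAux.root_inner_self_pos R hαmem
  have hβα : ⟪θ - θs, α⟫ = ⟪α, θ - θs⟫ := real_inner_comm α (θ - θs)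
  have hqr : 0 < (q : ℝ) := by
    have h1 : 0 < (q : ℝ) * ⟪α, α⟫ := by rw [← hq, hβα]; linarith
    rcases mul_pos_iff.1 h1 with h | h
    · exact h.1
    · linarith [hαα, h.2]
  have hq1 : (1 : ℝ) ≤ (q : ℝ) := by
    have : (0 : ℤ) < q := by exact_mod_cast hqr
    exact_mod_cast this
  have hdomθ := hθ.2.2 α hαmem hfα
  have hdomθs := (hθs.2.2 α hαmem hfα).2
  rcases hdich α hαmem with hlong | hshort
  · -- α is long
    have hval : ⟪θ - θs, α⟫ = 1 := by
      by_cases hαθ : α = θ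
      · rw [hαθ, real_inner_comm]; exact hθβ
      · obtain ⟨a, ha⟩ := PaperAux.cartan R hθmem hαmem
        rw [hnorm] at ha
        have haval : ⟪θ, α⟫ = (a : ℝ) := by rw [real_inner_comm]; linarith
        have hanegθ : α ≠ -θ := by intro h; rw [h, map_neg] at hfα; linarith
        have hcs := PaperAux.cs_strict R hθmem hαmem hαθ hanegθ
        rw [hnorm, hlong] at hcs
        have ha0 : 0 ≤ (a : ℝ) := by rw [← haval]; exact hdomθ.2
        have har : (a : ℝ) < 2 := by nlinarith [hcs, haval]
        have haz : (a : ℝ) ≤ 1 := by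
          have h1 : a < 2 := by exact_mod_cast har
          have h2 : a ≤ 1 := by omega
          exact_mod_cast h2
        have hqv : ⟪θ - θs, α⟫ = (q : ℝ) := by rw [hlong] at hq; linarith
        have hub : ⟪θ - θs, α⟫ ≤ 1 := by
          rw [inner_sub_left, haval]
          linarith [hdomθs]
        exact le_antisymm hub (by rw [hqv]; exact hq1)
    constructor
    · rw [hval, hlong]; norm_num
    · intro _
      refine ⟨hαmem, fun c hc => ?_⟩
      rcases hdich c hc with h | h <;> rw [h, hlong]
      linarith
  · -- α is short
    have hpd0 : 2 / p * p = 2 := div_mul_cancel₀ 2 hppos.ne'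
    have hqval : p * ⟪θ - θs, α⟫ = (q : ℝ) := by
      have h := hq
      rw [hshort] at h
      linear_combination (p / 2) * h + ((q : ℝ) / 2) * hpd0
    by_cases hαθs : α = θs
    · have hv : ⟪θ - θs, α⟫ = 1 - 2 / p := by
        rw [hαθs, real_inner_comm]; exact hθsβ
      rw [hv] at hqval
      rcases hp with hp' | hp'
      · exfalso
        rw [hp'] at hqval
        norm_num at hqval
        linarith
      · constructor
        · rw [hv, hαθs, hss, hp']; norm_num
        · intro h; rw [hp'] at h; norm_num at h
    · -- α short, α ≠ θs : show this forces a contradiction except never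
      have hαθ : α ≠ θ := by
        intro h; rw [h, hnorm] at hshort; linarith
      have hanegθ : α ≠ -θ := by intro h; rw [h, map_neg] at hfα; linarith
      have hanegθs : α ≠ -θs := by intro h; rw [h, map_neg] at hfα; linarith
      obtain ⟨a, ha⟩ := PaperAux.cartan R hθmem hαmem
      rw [hnorm] at ha
      have haval : ⟪θ, α⟫ = (a : ℝ) := by rw [real_inner_comm]; linarith
      have hcsθ := PaperAux.cs_strict R hθmem hαmem hαθ hanegθ
      rw [hnorm, hshort, haval] at hcsθ
      have ha0 : 0 ≤ (a : ℝ) := by rw [← haval]; exact hdomθ.2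
      have ha2 : (a : ℝ) ^ 2 < 2 := by
        have : 2 * (2 / p) ≤ 2 := by linarith
        linarith
      obtain ⟨b, hb⟩ := PaperAux.cartan R hθsmem hαmem
      rw [hss, real_inner_comm θs α] at hb
      have hpd : 2 / p * p = 2 := div_mul_cancel₀ 2 hppos.ne'
      have hbval : p * ⟪θs, α⟫ = (b : ℝ) := by
        linear_combination (p / 2) * hb + ((b : ℝ) / 2) * hpd
      have hb0 : 0 ≤ (b : ℝ) := hbval ▸ mul_nonneg hppos.le hdomθs
      have hcsθs := PaperAux.cs_strict R hθsmem hαmem hαθs hanegθs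
      rw [hss, hshort] at hcsθs
      have hxb : ⟪θs, α⟫ = (b : ℝ) / p := by
        rw [eq_div_iff hppos.ne']
        linarith [hbval]
      rw [hxb] at hcsθs
      have hb4 : (b : ℝ) ^ 2 < 4 := by
        have h := mul_lt_mul_of_pos_left hcsθs (by positivity : (0 : ℝ) < p ^ 2)
        have e1 : p ^ 2 * (((b : ℝ) / p) ^ 2) = (b : ℝ) ^ 2 := by field_simp
        have e2 : p ^ 2 * ((2 : ℝ) / p * (2 / p)) = 4 := by field_simp; ring
        linarith [h, e1, e2]
      have hbz : b = 0 ∨ b = 1 := by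
        have h1 : (0 : ℤ) ≤ b := by exact_mod_cast hb0
        have h2 : b < 2 := by
          by_contra hcon
          push_neg at hcon
          have : (2 : ℝ) ≤ (b : ℝ) := by exact_mod_cast hcon
          nlinarith
        omega
      have hble : (b : ℝ) ≤ 1 := by
        rcases hbz with h | h <;> rw [h] <;> norm_num
      -- q = p * a - b
      have hsub : ⟪θ - θs, α⟫ = ⟪θ, α⟫ - ⟪θs, α⟫ := inner_sub_left θ θs α
      rw [hsub, haval] at hqval
      have hqe : (q : ℝ) = p * (a : ℝ) - (b : ℝ) := by linear_combination -hqval - hbval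
      -- a = 1
      have hazz : a = 0 ∨ a = 1 := by
        have h2 : a ^ 2 < 2 := by exact_mod_cast ha2
        have h3 : (0 : ℤ) ≤ a := by exact_mod_cast ha0
        have h4 : a ≤ 1 := by nlinarith [h2, h3]
        omega
      have haa : a = 1 := by
        rcases hazz with h | h
        · exfalso
          rw [h] at hqe
          push_cast at hqe
          linarith
        · exact h
      have haR : ⟪θ, α⟫ = 1 := by rw [haval, haa]; norm_num
      -- t = θ - α is a short root
      have htmem : θ - α ∈ R.roots :=
        PaperAux.sub_root R hθmem hαmem (by rw [haR]; norm_num) (Ne.symm hαθ)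
      have htt : ⟪θ - α, θ - α⟫ = 2 / p := by
        have hexp2 : ⟪θ - α, θ - α⟫ = ⟪θ, θ⟫ - ⟪θ, α⟫ - ⟪θ, α⟫ + ⟪α, α⟫ := by
          rw [inner_sub_left, inner_sub_right, inner_sub_right, real_inner_comm θ α]
          ring
        rw [hexp2, hnorm, hshort, haR]; ring
      have ht1 : ⟪θs, θ - α⟫ = ⟪θs, θ⟫ - ⟪θs, α⟫ := inner_sub_right θs θ α
      have htθs : p * ⟪θs, θ - α⟫ = p - (b : ℝ) := by
        rw [ht1, hstheta]
        linear_combination -hbval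
      have htneθs : θ - α ≠ θs := by
        intro h
        apply hneβ
        rw [← h, sub_sub_cancel]
      have htnegθs : θ - α ≠ -θs := by
        intro h
        rw [h, inner_neg_right, hss] at htθs
        have hpd : p * (2 / p) = 2 := by field_simp
        have : p * -(2 / p) = -2 := by rw [mul_neg, hpd]
        linarith [htθs, this]
      have hcst := PaperAux.cs_strict R hθsmem htmem htneθs htnegθs
      rw [hss, htt] at hcst
      rcases hbz with hb' | hb'
      · -- b = 0 : impossible
        exfalso
        have hx1 : ⟪θs, θ - α⟫ = 1 := by
          have : p * ⟪θs, θ - α⟫ = p * 1 := by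
            rw [htθs, hb']; push_cast; ring
          exact mul_left_cancel₀ hppos.ne' this
        rw [hx1] at hcst
        have hle1 : (2 / p) * (2 / p) ≤ 1 := mul_le_one₀ hsle hspos.le hsle
        norm_num at hcst
        linarith [hcst, hle1]
      · -- b = 1
        have hbR : (b : ℝ) = 1 := by rw [hb']; norm_num
        -- (p - 1)^2 < 4
        have hpd : p * (2 / p) = 2 := by field_simp
        have hp3 : p = 2 := by
          rcases hp with h | h
          · exact h
          · exfalso
            rw [h] at htθs hcst
            have hx : ⟪θs, θ - α⟫ = 2 / 3 := by
              rw [hbR] at htθs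
              linarith [htθs]
            rw [hx] at hcst
            norm_num at hcst
        -- now p = 2, b = 1, q = 1 : contradiction with the inversion property
        exfalso
        have hqR : (q : ℝ) = 1 := by
          rw [hqe, haa, hbR, hp3]; push_cast; norm_num
        have hba : ⟪θ - θs, α⟫ = 1 / p := by
          rw [hsub, haR, hxb, hbR, hp3]
          norm_num
        have hc1 : 2 * ⟪α, θ - θs⟫ / ⟪θ - θs, θ - θs⟫ = 1 := by
          rw [← hβα, hba, hββ]
          field_simp
        have hreflval2 : Paper.refl (θ - θs) α = α - (θ - θs) := by
          rw [show Paper.refl (θ - θs) α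
              = α - (2 * ⟪α, θ - θs⟫ / ⟪θ - θs, θ - θs⟫) • (θ - θs) from rfl,
            hc1, one_smul]
        have hγmem : (θ - θs) - α ∈ R.roots := by
          have h1 := R.reflect_mem (θ - θs) hβmem α hαmem
          rw [hreflval2] at h1
          have := R.neg_mem _ h1
          rwa [neg_sub] at this
        rw [hc1, one_mul] at hinv
        have hfγ : 0 < f ((θ - θs) - α) := by rw [map_sub]; linarith
        have hdom2 := (hθs.2.2 _ hγmem hfγ).2
        rw [inner_sub_right, hθsβ] at hdom2
        have hbv2 : (2 : ℝ) * ⟪θs, α⟫ = 1 := by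
          rw [← hp3, hbval, hbR]
        rw [hp3] at hdom2
        norm_num at hdom2
        linarith [hbv2, hdom2]
end

section
/- Let W̃ = W ⋉ Q be the double affine Weyl group (W the affine Weyl group acting on the root lattice Q = Q̊ ⊕ ℤδ by w τ_β w⁻¹ = τ_{w(β)}), and W̃^ι the analogous group for the dual data. Then the map φ sending ẘ ↦ ẘ for ẘ ∈ W̊, λ_μ ↦ τ^ι_{μ/√p} for μ ∈ M, τ_β ↦ λ^ι_{√p β} for β ∈ Q̊, and τ_δ ↦ τ^ι_{−δ}, is a group isomorphism W̃ → W̃^ι, whose inverse is the analogous map φ^ι: W̃^ι → W̃. -/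
open scoped RealInnerProductSpace

namespace Paper

variable {V : Type*} [NormedAddCommGroup V] [InnerProductSpace ℝ V]

/-- Elements `τ_{β+kδ} λ_μ ẘ` of the double affine Weyl group `W̃ = W ⋉ Q`,
recorded as triples `((β, k), μ, ẘ)`. -/
abbrev DAW (V : Type*) := (V × ℝ) × V × (V → V)

/-- Multiplication of `W̃` in the normal form `τ_{β+kδ} λ_μ ẘ`, obtained from
`w τ_β w⁻¹ = τ_{w(β)}` and the level-zero action `λ_μ(x) = x − (x,μ)δ`. -/
noncomputable def dawMul (x y : DAW V) : DAW V :=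
  ((x.1.1 + x.2.2 y.1.1, x.1.2 + y.1.2 - ⟪x.2.2 y.1.1, x.2.1⟫),
    x.2.1 + x.2.2 y.2.1, x.2.2 ∘ y.2.2)

/-- The subset of `(V × ℝ) × V × (V → V)` realizing `W̃`: `β ∈ Q̊`, `k ∈ ℤ`,
`μ ∈ M`, `ẘ ∈ W̊`. -/
def dawSet (Q M : AddSubgroup V) (Δ : Set V) : Set (DAW V) :=
  {x | x.1.1 ∈ Q ∧ (∃ m : ℤ, x.1.2 = (m : ℝ)) ∧ x.2.1 ∈ M ∧ InWeylWords Δ x.2.2}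

/-- The map `φ : W̃ → W̃^ι` determined by `ẘ ↦ ẘ`, `λ_μ ↦ τ^ι_{μ/√p}`,
`τ_β ↦ λ^ι_{√p β}` and `τ_δ ↦ τ^ι_{−δ}`, written in normal form. -/
noncomputable def dawPhi (p : ℝ) (x : DAW V) : DAW V :=
  (((Real.sqrt p)⁻¹ • x.2.1, -x.1.2 - ⟪x.2.1, x.1.1⟫),
    Real.sqrt p • x.1.1, x.2.2)

end Paper

/-! Every `ẘ ∈ W̊` is a product of reflections, hence a linear isometry of `V`; this is all
that is needed for `φ` to respect the correction term `⟪ẘ β₂, μ₁⟫` of the product, since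
`√p` and `1/√p` cancel in it. The same cancellation `⟪√p β, μ/√p⟫ = ⟪β, μ⟫` makes `φ` an
involution and makes the dual lattices `M/√p`, `√p Q̊` pair integrally, so that `φ` and
`φ^ι` map `W̃` and `W̃^ι` into each other. -/

namespace Paper

variable {V : Type*} [NormedAddCommGroup V] [InnerProductSpace ℝ V]

lemma refl_add (α x y : V) : refl α (x + y) = refl α x + refl α y := by
  simp only [refl, inner_add_left, add_div, mul_add, add_smul]
  abel

lemma refl_smul (α : V) (c : ℝ) (x : V) : refl α (c • x) = c • refl α x := by
  simp only [refl, real_inner_smul_left, smul_sub, smul_smul]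
  congr 2
  ring

lemma inner_refl_refl (α x y : V) : ⟪refl α x, refl α y⟫ = ⟪x, y⟫ := by
  rcases eq_or_ne α 0 with rfl | hα
  · simp [refl]
  · have hαα : ⟪α, α⟫ ≠ 0 := inner_self_ne_zero.mpr hα
    simp only [refl, inner_sub_left, inner_sub_right, real_inner_smul_left,
      real_inner_smul_right, real_inner_comm α x, real_inner_comm α y]
    field_simp
    ring

noncomputable def reflIsometry (α : V) : V →ₗᵢ[ℝ] V :=
  LinearMap.isometryOfInner
    { toFun := refl α, map_add' := refl_add α, map_smul' := refl_smul α }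
    (inner_refl_refl α)

noncomputable def wordProdIsometry (L : List V) : V →ₗᵢ[ℝ] V :=
  L.foldr (fun α e => (reflIsometry α).comp e) LinearIsometry.id

lemma coe_wordProdIsometry (L : List V) : ⇑(wordProdIsometry L) = wordProd L := by
  induction L with
  | nil => rfl
  | cons α L ih =>
    change ⇑(reflIsometry α) ∘ ⇑(wordProdIsometry L) = refl α ∘ wordProd L
    rw [ih]
    rfl

lemma InWeylWords.exists_linearIsometry {Δ : Set V} {w : V → V} (hw : InWeylWords Δ w) :
    ∃ e : V →ₗᵢ[ℝ] V, ⇑e = w := by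
  obtain ⟨L, -, rfl⟩ := hw
  exact ⟨wordProdIsometry L, coe_wordProdIsometry L⟩

lemma dawPhi_dawPhi {p : ℝ} (hp : 0 < p) (x : DAW V) : dawPhi p (dawPhi p x) = x := by
  obtain ⟨⟨β, k⟩, μ, w⟩ := x
  have hs : Real.sqrt p ≠ 0 := (Real.sqrt_pos.2 hp).ne'
  simp only [dawPhi, smul_smul, inv_mul_cancel₀ hs, mul_inv_cancel₀ hs, one_smul,
    real_inner_smul_left, real_inner_smul_right, real_inner_comm μ β]
  field_simp
  ring_nf

lemma dawPhi_dawMul {p : ℝ} (hp : 0 < p) {x : DAW V} (e : V →ₗᵢ[ℝ] V) (hx : x.2.2 = e)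
    (y : DAW V) : dawPhi p (dawMul x y) = dawMul (dawPhi p x) (dawPhi p y) := by
  obtain ⟨⟨β₁, k₁⟩, μ₁, w⟩ := x
  obtain ⟨⟨β₂, k₂⟩, μ₂, w₂⟩ := y
  obtain rfl : w = e := hx
  have hs : Real.sqrt p ≠ 0 := (Real.sqrt_pos.2 hp).ne'
  simp only [dawPhi, dawMul, LinearIsometry.map_smul, smul_add, Prod.mk.injEq, true_and,
    and_true, inner_add_left, inner_add_right, real_inner_smul_left, real_inner_smul_right,
    LinearIsometry.inner_map_map, real_inner_comm μ₁ (e β₂)]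
  field_simp
  ring

lemma dawPhi_mapsTo {p : ℝ} {Δ : Set V} {Q M Q' M' : AddSubgroup V}
    (hint : ∀ μ ∈ M, ∀ β ∈ Q, ∃ m : ℤ, ⟪μ, β⟫ = m)
    (hQ' : ∀ μ ∈ M, (Real.sqrt p)⁻¹ • μ ∈ Q') (hM' : ∀ β ∈ Q, Real.sqrt p • β ∈ M') :
    Set.MapsTo (dawPhi p) (dawSet Q M Δ) (dawSet Q' M' Δ) := by
  rintro ⟨⟨β, k⟩, μ, w⟩ ⟨hβ, ⟨m, rfl⟩, hμ, hw⟩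
  obtain ⟨n, hn⟩ := hint μ hμ β hβ
  exact ⟨hQ' μ hμ, ⟨-m - n, by simp [dawPhi, hn]⟩, hM' β hβ, hw⟩

lemma dawPhi_mapsTo_of_dual {p : ℝ} (hp : 0 < p) {Δ : Set V} {Q M Q' M' : AddSubgroup V}
    (hint : ∀ μ ∈ M, ∀ β ∈ Q, ∃ m : ℤ, ⟪μ, β⟫ = m)
    (hQ' : (Q' : Set V) = (fun v => (Real.sqrt p)⁻¹ • v) '' (M : Set V))
    (hM' : (M' : Set V) = (fun v => Real.sqrt p • v) '' (Q : Set V)) :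
    Set.MapsTo (dawPhi p) (dawSet Q' M' Δ) (dawSet Q M Δ) := by
  have hs : Real.sqrt p ≠ 0 := (Real.sqrt_pos.2 hp).ne'
  have mem_Q' {v : V} : v ∈ Q' ↔ ∃ μ ∈ M, (Real.sqrt p)⁻¹ • μ = v := by
    rw [← SetLike.mem_coe, hQ']; rfl
  have mem_M' {v : V} : v ∈ M' ↔ ∃ β ∈ Q, Real.sqrt p • β = v := by
    rw [← SetLike.mem_coe, hM']; rfl
  refine dawPhi_mapsTo ?_ ?_ ?_
  · rintro _ hβ' _ hμ'
    obtain ⟨β, hβ, rfl⟩ := mem_M'.1 hβ'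
    obtain ⟨μ, hμ, rfl⟩ := mem_Q'.1 hμ'
    obtain ⟨m, hm⟩ := hint μ hμ β hβ
    refine ⟨m, ?_⟩
    rw [real_inner_smul_left, real_inner_smul_right, real_inner_comm, ← hm]
    field_simp
  · rintro _ hβ'
    obtain ⟨β, hβ, rfl⟩ := mem_M'.1 hβ'
    rwa [smul_smul, inv_mul_cancel₀ hs, one_smul]
  · rintro _ hμ'
    obtain ⟨μ, hμ, rfl⟩ := mem_Q'.1 hμ'
    rwa [smul_smul, mul_inv_cancel₀ hs, one_smul]

end Paper

open Paper in
theorem daw_involution_general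
    {V : Type*} [NormedAddCommGroup V] [InnerProductSpace ℝ V]
    (Δ : Set V)
    (p : ℝ) (hp : p = 1 ∨ p = 2 ∨ p = 3)
    (Qlat Mlat Qι Mι : AddSubgroup V)
    (hint : ∀ μ ∈ Mlat, ∀ β ∈ Qlat, ∃ m : ℤ, ⟪μ, β⟫ = (m : ℝ))
    (hQι : (Qι : Set V) = (fun v => (Real.sqrt p)⁻¹ • v) '' (Mlat : Set V))
    (hMι : (Mι : Set V) = (fun v => Real.sqrt p • v) '' (Qlat : Set V)) :
    Set.BijOn (dawPhi p) (dawSet Qlat Mlat Δ) (dawSet Qι Mι Δ) ∧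
    (∀ x ∈ dawSet Qlat Mlat Δ, ∀ y ∈ dawSet Qlat Mlat Δ,
      dawPhi p (dawMul x y) = dawMul (dawPhi p x) (dawPhi p y)) ∧
    (dawPhi p ∘ dawPhi p = (id : DAW V → DAW V)) ∧
    (∀ w : V → V, dawPhi p ((0, 0), 0, w) = ((0, 0), 0, w)) ∧
    (∀ μ : V, dawPhi p ((0, 0), μ, id) = (((Real.sqrt p)⁻¹ • μ, 0), 0, id)) ∧
    (∀ β : V, dawPhi p ((β, 0), 0, id) = ((0, 0), Real.sqrt p • β, id)) ∧
    dawPhi p ((0, 1), 0, id) = ((0, -1), 0, (id : V → V)) := by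
  have hp0 : 0 < p := by rcases hp with rfl | rfl | rfl <;> norm_num
  have hinvol : ∀ x : DAW V, dawPhi p (dawPhi p x) = x := dawPhi_dawPhi hp0
  have hmapsTo : Set.MapsTo (dawPhi p) (dawSet Qlat Mlat Δ) (dawSet Qι Mι Δ) :=
    dawPhi_mapsTo hint
      (fun μ hμ => show _ ∈ (Qι : Set V) from hQι ▸ Set.mem_image_of_mem _ hμ)
      (fun β hβ => show _ ∈ (Mι : Set V) from hMι ▸ Set.mem_image_of_mem _ hβ)
  refine ⟨Set.InvOn.bijOn ⟨fun x _ => hinvol x, fun x _ => hinvol x⟩ hmapsTo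
      (dawPhi_mapsTo_of_dual hp0 hint hQι hMι), ?_, funext hinvol, ?_, ?_, ?_, ?_⟩
  · rintro x ⟨-, -, -, hw⟩ y -
    obtain ⟨e, he⟩ := hw.exists_linearIsometry
    exact dawPhi_dawMul hp0 e he.symm y
  all_goals simp [dawPhi]

open Paper in
/-- `φ : W̃ → W̃^ι` (with `M^ι = √p·Q̊` and `Q̊^ι = (1/√p)·M`) is a
group isomorphism whose inverse is the analogous map `φ^ι` (which has the same
formula, so `φ ∘ φ = id`), acting on the generators by `ẘ ↦ ẘ`,
`λ_μ ↦ τ^ι_{μ/√p}`, `τ_β ↦ λ^ι_{√p β}`, `τ_δ ↦ τ^ι_{−δ}`. -/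
theorem daw_involution
    {V : Type*} [NormedAddCommGroup V] [InnerProductSpace ℝ V]
    (R : RootSystemData V) (f : V →ₗ[ℝ] ℝ) (Δ : Set V)
    (hreg : R.IsRegular f) (hbase : R.IsBase f Δ)
    (p : ℝ) (hp : p = 1 ∨ p = 2 ∨ p = 3)
    (Qlat Mlat Qι Mι : AddSubgroup V)
    (hint : ∀ μ ∈ Mlat, ∀ β ∈ Qlat, ∃ m : ℤ, ⟪μ, β⟫ = (m : ℝ))
    (hQι : (Qι : Set V) = (fun v => (Real.sqrt p)⁻¹ • v) '' (Mlat : Set V))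
    (hMι : (Mι : Set V) = (fun v => Real.sqrt p • v) '' (Qlat : Set V)) :
    Set.BijOn (dawPhi p) (dawSet Qlat Mlat Δ) (dawSet Qι Mι Δ) ∧
    (∀ x ∈ dawSet Qlat Mlat Δ, ∀ y ∈ dawSet Qlat Mlat Δ,
      dawPhi p (dawMul x y) = dawMul (dawPhi p x) (dawPhi p y)) ∧
    (dawPhi p ∘ dawPhi p = (id : DAW V → DAW V)) ∧
    (∀ w : V → V, dawPhi p ((0, 0), 0, w) = ((0, 0), 0, w)) ∧
    (∀ μ : V, dawPhi p ((0, 0), μ, id) = (((Real.sqrt p)⁻¹ • μ, 0), 0, id)) ∧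
    (∀ β : V, dawPhi p ((β, 0), 0, id) = ((0, 0), Real.sqrt p • β, id)) ∧
    dawPhi p ((0, 1), 0, id) = ((0, -1), 0, (id : V → V)) :=
  daw_involution_general Δ p hp Qlat Mlat Qι Mι hint hQι hMι
end

section
/- Let R̊ be an irreducible finite root system with two root lengths and squared-length ratio p = 2, θ its highest root and θ_s its highest short root. If α is a positive root with s_{θ−θ_s}(α) a negative root and α ≠ θ−θ_s, then (α, θ_s) = 0, (α, θ) = 1 (with (θ,θ) = 2 normalization), α is a long root, and ⟨α, (θ−θ_s)^∨⟩ = 2. -/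
open scoped RealInnerProductSpace

namespace Paper

section Aux
variable {V : Type*} [NormedAddCommGroup V] [InnerProductSpace ℝ V]

lemma inner_self_pos' {x : V} (h : x ≠ 0) : 0 < ⟪x, x⟫ :=
  lt_of_le_of_ne real_inner_self_nonneg fun hh => h (inner_self_eq_zero.1 hh.symm)

lemma span_inner_zero {s : Set V} {y : V} (h : ∀ b ∈ s, ⟪b, y⟫ = 0) {x : V}
    (hx : x ∈ Submodule.span ℝ s) : ⟪x, y⟫ = 0 := by
  induction hx using Submodule.span_induction with
  | mem b hb => exact h b hb
  | zero => simp
  | add u v _ _ hu hv => rw [inner_add_left, hu, hv]; ring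
  | smul r u _ hu => rw [real_inner_smul_left, hu]; ring

lemma span_span_inner_zero {s t : Set V} (h : ∀ b ∈ s, ∀ c ∈ t, ⟪b, c⟫ = 0) {x y : V}
    (hx : x ∈ Submodule.span ℝ s) (hy : y ∈ Submodule.span ℝ t) : ⟪x, y⟫ = 0 := by
  have hb : ∀ c ∈ t, ⟪c, x⟫ = 0 := by
    intro c hc
    rw [real_inner_comm]
    exact span_inner_zero (fun b hb => h b hb c hc) hx
  rw [real_inner_comm]
  exact span_inner_zero hb hy

lemma ms_inner_sum (L : Multiset V) (x : V) :
    ⟪L.sum, x⟫ = (L.map fun b => ⟪b, x⟫).sum := by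
  induction L using Multiset.induction with
  | empty => simp
  | cons a s ih => simp [inner_add_left, ih]

lemma ms_sum_nonpos {s : Multiset ℝ} (h : ∀ x ∈ s, x ≤ 0) : s.sum ≤ 0 := by
  induction s using Multiset.induction with
  | empty => simp
  | cons a t ih =>
    simp only [Multiset.sum_cons]
    have h1 := h a (Multiset.mem_cons_self a t)
    have h2 := ih fun x hx => h x (Multiset.mem_cons_of_mem hx)
    linarith

lemma ms_all_zero {s : Multiset ℝ} (h : ∀ x ∈ s, x ≤ 0) (h2 : 0 ≤ s.sum) : ∀ x ∈ s, x = 0 := by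
  induction s using Multiset.induction with
  | empty => simp
  | cons a t ih =>
    have ha := h a (Multiset.mem_cons_self a t)
    have hts := ms_sum_nonpos fun x hx => h x (Multiset.mem_cons_of_mem hx)
    rw [Multiset.sum_cons] at h2
    intro x hx
    rcases Multiset.mem_cons.1 hx with rfl | hx'
    · linarith
    · exact ih (fun y hy => h y (Multiset.mem_cons_of_mem hy)) (by linarith) x hx'

lemma ms_sum_map_neg (s : Multiset ℝ) : (s.map Neg.neg).sum = -s.sum := by
  induction s using Multiset.induction with
  | empty => simp
  | cons a t ih =>
    simp only [Multiset.map_cons, Multiset.sum_cons, ih]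
    ring

lemma ms_all_zero' {s : Multiset ℝ} (h : ∀ x ∈ s, 0 ≤ x) (h2 : s.sum ≤ 0) : ∀ x ∈ s, x = 0 := by
  intro x hx
  have key := ms_all_zero (s := s.map Neg.neg) (by
    intro y hy
    obtain ⟨z, hz, rfl⟩ := Multiset.mem_map.1 hy
    simpa using h z hz)
    (by rw [ms_sum_map_neg]; linarith)
  have := key (-x) (Multiset.mem_map_of_mem _ hx)
  linarith

lemma ms_exists_pos {s : Multiset ℝ} (h : 0 < s.sum) : ∃ x ∈ s, 0 < x := by
  by_contra hc
  push_neg at hc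
  exact absurd (ms_sum_nonpos hc) (by linarith)

lemma root_sub_root (R : RootSystemData V) {a b : V} (ha : a ∈ R.roots) (hb : b ∈ R.roots)
    (hab : a ≠ b) (hip : 0 < ⟪a, b⟫) : a - b ∈ R.roots := by
  have ha0 : 0 < ⟪a, a⟫ := inner_self_pos' (R.ne_zero a ha)
  have hb0 : 0 < ⟪b, b⟫ := inner_self_pos' (R.ne_zero b hb)
  obtain ⟨m, hm⟩ := R.cartan_int b hb a ha
  obtain ⟨n, hn⟩ := R.cartan_int a ha b hb
  rw [real_inner_comm a b] at hn
  have hm' : (m : ℝ) * ⟪b, b⟫ = 2 * ⟪a, b⟫ := by rw [hm]; field_simp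
  have hn' : (n : ℝ) * ⟪a, a⟫ = 2 * ⟪a, b⟫ := by rw [hn]; field_simp
  have hmpos : 0 < m := by
    have : 0 < (m : ℝ) := by nlinarith
    exact_mod_cast this
  have hnpos : 0 < n := by
    have : 0 < (n : ℝ) := by nlinarith
    exact_mod_cast this
  have hkey : m = 1 ∨ n = 1 := by
    by_contra hc
    push_neg at hc
    have hm2 : 2 ≤ m := by omega
    have hn2 : 2 ≤ n := by omega
    have hprod : ((m : ℝ) * n) * (⟪b, b⟫ * ⟪a, a⟫) = 4 * (⟪a, b⟫ * ⟪a, b⟫) := by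
      calc ((m : ℝ) * n) * (⟪b, b⟫ * ⟪a, a⟫) = ((m : ℝ) * ⟪b, b⟫) * ((n : ℝ) * ⟪a, a⟫) := by ring
        _ = (2 * ⟪a, b⟫) * (2 * ⟪a, b⟫) := by rw [hm', hn']
        _ = 4 * (⟪a, b⟫ * ⟪a, b⟫) := by ring
    have hcs := real_inner_mul_inner_self_le a b
    have hmn4 : (m : ℝ) * n ≤ 4 := by nlinarith [mul_pos hb0 ha0]
    have hmn4' : m * n ≤ 4 := by exact_mod_cast hmn4
    have hmeq : m = 2 := by nlinarith
    have hneq : n = 2 := by nlinarith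
    have hab1 : ⟪a, b⟫ = ⟪b, b⟫ := by
      rw [hmeq] at hm'; push_cast at hm'; linarith
    have hab2 : ⟪a, b⟫ = ⟪a, a⟫ := by
      rw [hneq] at hn'; push_cast at hn'; linarith
    have : ⟪a - b, a - b⟫ = 0 := by
      rw [real_inner_sub_sub_self]
      linarith
    exact hab (sub_eq_zero.1 (inner_self_eq_zero.1 this))
  rcases hkey with h1 | h1
  · have e : refl b a = a - b := by
      simp only [refl]
      rw [← hm, h1]
      norm_num
    have := R.reflect_mem b hb a ha
    rwa [e] at this
  · have e : refl a b = b - a := by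
      simp only [refl]
      rw [real_inner_comm a b, ← hn, h1]
      norm_num
    have h2 := R.reflect_mem a ha b hb
    rw [e] at h2
    have := R.neg_mem _ h2
    rwa [neg_sub] at this


theorem theta_thetas_inner_ne_zero (R : RootSystemData V) (f : V →ₗ[ℝ] ℝ)
    (hreg : R.IsRegular f) {θ θs : V}
    (hθ : R.IsHighestRoot f θ) (hθs : R.IsHighestShortRoot f θs) :
    ⟪θ, θs⟫ ≠ 0 := by
  classical
  intro ht0
  obtain ⟨⟨hθroot, _⟩, hfθ, hθdom⟩ := hθ
  obtain ⟨⟨hθsroot, _⟩, hfθs, hθsdom⟩ := hθs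
  set P : Finset V := R.roots.filter (fun γ => 0 < f γ) with hPdef
  have hPsub : ∀ γ ∈ P, γ ∈ R.roots := fun γ hγ => (Finset.mem_filter.1 hγ).1
  have hPpos : ∀ γ ∈ P, 0 < f γ := fun γ hγ => (Finset.mem_filter.1 hγ).2
  have hPmem : ∀ γ, γ ∈ R.roots → 0 < f γ → γ ∈ P := fun γ h1 h2 => Finset.mem_filter.2 ⟨h1, h2⟩
  set Δ : Finset V := P.filter (fun γ => ¬ ∃ δ ∈ P, ∃ ε ∈ P, γ = δ + ε) with hΔdef
  have hΔP : ∀ a ∈ Δ, a ∈ P := fun a ha => (Finset.mem_filter.1 ha).1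
  have hΔroots : ∀ a ∈ Δ, a ∈ R.roots := fun a ha => hPsub a (hΔP a ha)
  have hΔnotsum : ∀ a ∈ Δ, ∀ δ ∈ P, ∀ ε ∈ P, a ≠ δ + ε := by
    intro a ha δ hδ ε hε hc
    exact (Finset.mem_filter.1 ha).2 ⟨δ, hδ, ε, hε, hc⟩
  have hmsr : ∀ δ ∈ P, ∀ γ : V, f δ < f γ →
      (P.filter (fun ρ => f ρ < f δ)).card < (P.filter (fun ρ => f ρ < f γ)).card := by
    intro δ hδ γ hlt
    apply Finset.card_lt_card
    rw [Finset.ssubset_iff_of_subset]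
    · exact ⟨δ, Finset.mem_filter.2 ⟨hδ, hlt⟩, fun hc => lt_irrefl _ (Finset.mem_filter.1 hc).2⟩
    · intro x hx
      have hx' := Finset.mem_filter.1 hx
      exact Finset.mem_filter.2 ⟨hx'.1, hx'.2.trans hlt⟩
  -- decomposition into simples
  have hdec : ∀ γ ∈ P, ∃ L : Multiset V, (∀ a ∈ L, a ∈ Δ) ∧ L.sum = γ := by
    have key : ∀ n : ℕ, ∀ γ ∈ P, (P.filter (fun ρ => f ρ < f γ)).card < n →
        ∃ L : Multiset V, (∀ a ∈ L, a ∈ Δ) ∧ L.sum = γ := by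
      intro n
      induction n with
      | zero => intro γ _ h; omega
      | succ n ih =>
        intro γ hγ hcard
        by_cases hs : ∃ δ ∈ P, ∃ ε ∈ P, γ = δ + ε
        · obtain ⟨δ, hδ, ε, hε, rfl⟩ := hs
          have hfδε : f (δ + ε) = f δ + f ε := map_add f δ ε
          have h1 : f δ < f (δ + ε) := by have := hPpos ε hε; rw [hfδε]; linarith
          have h2 : f ε < f (δ + ε) := by have := hPpos δ hδ; rw [hfδε]; linarith
          obtain ⟨L1, hL1, hL1s⟩ := ih δ hδ (by have := hmsr δ hδ _ h1; omega)
          obtain ⟨L2, hL2, hL2s⟩ := ih ε hε (by have := hmsr ε hε _ h2; omega)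
          refine ⟨L1 + L2, ?_, by rw [Multiset.sum_add, hL1s, hL2s]⟩
          intro a ha
          rcases Multiset.mem_add.1 ha with h | h
          exacts [hL1 a h, hL2 a h]
        · have hγΔ : γ ∈ Δ := Finset.mem_filter.2 ⟨hγ, hs⟩
          exact ⟨{γ}, by simpa using hγΔ, by simp⟩
    intro γ hγ
    exact key _ γ hγ (Nat.lt_succ_self _)
  -- distinct simple roots have nonpositive inner product
  have hsimp_nonpos : ∀ a ∈ Δ, ∀ b ∈ Δ, a ≠ b → ⟪a, b⟫ ≤ 0 := by
    intro a ha b hb hab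
    by_contra hc
    push_neg at hc
    have hsub := root_sub_root R (hΔroots a ha) (hΔroots b hb) hab hc
    rcases lt_or_gt_of_ne (hreg _ hsub) with h | h
    · have hba : b - a ∈ R.roots := by
        have := R.neg_mem _ hsub; rwa [neg_sub] at this
      have hfba : 0 < f (b - a) := by
        rw [map_sub] at h ⊢; linarith
      exact hΔnotsum b hb a (hΔP a ha) (b - a) (hPmem _ hba hfba) (by abel)
    · exact hΔnotsum a ha b (hΔP b hb) (a - b) (hPmem _ hsub h) (by abel)
  have hθP : θ ∈ P := hPmem θ hθroot hfθ
  have hθsP : θs ∈ P := hPmem θs hθsroot hfθs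
  obtain ⟨Lθ, hLθΔ, hLθsum⟩ := hdec θ hθP
  set S0 : Finset V := Lθ.toFinset with hS0def
  set S1 : Finset V := Δ \ S0 with hS1def
  have hS0Δ : ∀ b ∈ S0, b ∈ Δ := fun b hb => hLθΔ b (Multiset.mem_toFinset.1 hb)
  have horth : ∀ b ∈ S0, ∀ a ∈ S1, ⟪b, a⟫ = 0 := by
    intro b hb a ha1
    obtain ⟨haΔ, haS0⟩ := Finset.mem_sdiff.1 ha1
    have hdom : 0 ≤ ⟪θ, a⟫ := (hθdom a (hΔroots a haΔ) (hPpos a (hΔP a haΔ))).2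
    have hsum := ms_inner_sum Lθ a
    rw [hLθsum] at hsum
    have hle : ∀ x ∈ Lθ.map fun c => ⟪c, a⟫, x ≤ 0 := by
      intro x hx
      obtain ⟨c, hc, rfl⟩ := Multiset.mem_map.1 hx
      refine hsimp_nonpos c (hLθΔ c hc) a haΔ fun hca => ?_
      exact haS0 (hca ▸ Multiset.mem_toFinset.2 hc)
    have hz := ms_all_zero hle (by rw [← hsum]; exact hdom)
    exact hz _ (Multiset.mem_map_of_mem _ (Multiset.mem_toFinset.1 hb))
  have hA01 : ∀ x ∈ Submodule.span ℝ (S0 : Set V), ∀ y ∈ Submodule.span ℝ (S1 : Set V),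
      ⟪x, y⟫ = 0 := by
    intro x hx y hy
    exact span_span_inner_zero (fun b hb c hc => horth b hb c hc) hx hy
  have hA10 : ∀ x ∈ Submodule.span ℝ (S1 : Set V), ∀ y ∈ Submodule.span ℝ (S0 : Set V),
      ⟪x, y⟫ = 0 := by
    intro x hx y hy
    rw [real_inner_comm]
    exact hA01 y hy x hx
  -- split lemma
  have hsplit : ∀ γ ∈ P, γ ∈ Submodule.span ℝ (S0 : Set V) ∨ γ ∈ Submodule.span ℝ (S1 : Set V) := by
    have key : ∀ n : ℕ, ∀ γ ∈ P, (P.filter (fun ρ => f ρ < f γ)).card < n →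
        γ ∈ Submodule.span ℝ (S0 : Set V) ∨ γ ∈ Submodule.span ℝ (S1 : Set V) := by
      intro n
      induction n with
      | zero => intro γ _ h; omega
      | succ n ih =>
        intro γ hγP hcard
        have IH : ∀ ρ ∈ P, f ρ < f γ →
            ρ ∈ Submodule.span ℝ (S0 : Set V) ∨ ρ ∈ Submodule.span ℝ (S1 : Set V) := by
          intro ρ hρ hlt
          exact ih ρ hρ (by have := hmsr ρ hρ γ hlt; omega)
        obtain ⟨L, hLΔ, hLsum⟩ := hdec γ hγP
        have hγroots := hPsub γ hγP
        have hγγ : 0 < ⟪γ, γ⟫ := inner_self_pos' (R.ne_zero γ hγroots)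
        have hsum := ms_inner_sum L γ
        rw [hLsum] at hsum
        obtain ⟨x, hxmem, hxpos⟩ := ms_exists_pos (s := L.map fun c => ⟪c, γ⟫)
          (by rw [← hsum]; exact hγγ)
        obtain ⟨a, haL, rfl⟩ := Multiset.mem_map.1 hxmem
        have haΔ := hLΔ a haL
        have haroots := hΔroots a haΔ
        have haP := hΔP a haΔ
        have hfa := hPpos a haP
        have haside : a ∈ S0 ∨ a ∈ S1 := by
          by_cases h : a ∈ S0
          · exact Or.inl h
          · exact Or.inr (Finset.mem_sdiff.2 ⟨haΔ, h⟩)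
        by_cases hγa : γ = a
        · subst hγa
          rcases haside with h | h
          · exact Or.inl (Submodule.subset_span (Finset.mem_coe.2 h))
          · exact Or.inr (Submodule.subset_span (Finset.mem_coe.2 h))
        · have hγa' : 0 < ⟪γ, a⟫ := by rw [real_inner_comm]; exact hxpos
          have hδroot : γ - a ∈ R.roots := root_sub_root R hγroots haroots hγa hγa'
          have hfδ : 0 < f (γ - a) := by
            rcases lt_or_gt_of_ne (hreg _ hδroot) with h | h
            · exfalso
              have haγroot : a - γ ∈ R.roots := by
                have := R.neg_mem _ hδroot; rwa [neg_sub] at this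
              have hfaγ : 0 < f (a - γ) := by rw [map_sub] at h ⊢; linarith
              exact hΔnotsum a haΔ γ hγP (a - γ) (hPmem _ haγroot hfaγ) (by abel)
            · exact h
          have hδP : γ - a ∈ P := hPmem _ hδroot hfδ
          have hfδlt : f (γ - a) < f γ := by rw [map_sub]; linarith
          have hδside := IH (γ - a) hδP hfδlt
          have haa : 0 < ⟪a, a⟫ := inner_self_pos' (R.ne_zero a haroots)
          -- the mixed case is impossible
          have mixed : ∀ (T0 T1 : Finset V),
              (∀ x ∈ Submodule.span ℝ (T0 : Set V), ∀ y ∈ Submodule.span ℝ (T1 : Set V),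
                ⟪x, y⟫ = 0) →
              (∀ ρ ∈ P, f ρ < f γ →
                ρ ∈ Submodule.span ℝ (T0 : Set V) ∨ ρ ∈ Submodule.span ℝ (T1 : Set V)) →
              γ - a ∈ Submodule.span ℝ (T0 : Set V) → a ∈ T1 → False := by
            intro T0 T1 horth' ih' hδT0 haT1
            have haspan : a ∈ Submodule.span ℝ (T1 : Set V) :=
              Submodule.subset_span (Finset.mem_coe.2 haT1)
            have hδa : ⟪γ - a, a⟫ = 0 := horth' _ hδT0 _ haspan
            have hfδ' : f a < f γ := by
              have := hfδ; rw [map_sub] at this; linarith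
            have hγa2 : ⟪γ, a⟫ = ⟪a, a⟫ := by
              rw [inner_sub_left] at hδa; linarith
            have hrefl : Paper.refl a γ = (γ - a) - a := by
              simp only [Paper.refl]
              rw [hγa2, show 2 * ⟪a, a⟫ / ⟪a, a⟫ = 2 from by
                rw [div_eq_iff (ne_of_gt haa)], two_smul ℝ a]
              abel
            have hρroot : (γ - a) - a ∈ R.roots := hrefl ▸ R.reflect_mem a haroots γ hγroots
            rcases lt_or_gt_of_ne (hreg _ hρroot) with hneg' | hpos'
            · have hρ'root : a - (γ - a) ∈ R.roots := by
                have := R.neg_mem _ hρroot; rwa [neg_sub] at this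
              have hfρ' : 0 < f (a - (γ - a)) := by
                rw [map_sub] at hneg' ⊢; rw [map_sub] at hneg' ⊢; linarith
              have hρ'P := hPmem _ hρ'root hfρ'
              have hlt' : f (a - (γ - a)) < f γ := by
                rw [map_sub, map_sub]; linarith [hfδ']
              rcases ih' _ hρ'P hlt' with h0 | h1
              · have haT0 : a ∈ Submodule.span ℝ (T0 : Set V) := by
                  have e : a = (a - (γ - a)) + (γ - a) := by abel
                  rw [e]; exact Submodule.add_mem _ h0 hδT0
                exact haa.ne' (horth' _ haT0 _ haspan)
              · have hδT1 : γ - a ∈ Submodule.span ℝ (T1 : Set V) := by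
                  have e : γ - a = a - (a - (γ - a)) := by abel
                  rw [e]; exact Submodule.sub_mem _ haspan h1
                exact (R.ne_zero _ hδroot) (inner_self_eq_zero.1 (horth' _ hδT0 _ hδT1))
            · have hρP := hPmem _ hρroot hpos'
              have hlt' : f ((γ - a) - a) < f γ := by
                rw [map_sub, map_sub]; linarith
              rcases ih' _ hρP hlt' with h0 | h1
              · have haT0 : a ∈ Submodule.span ℝ (T0 : Set V) := by
                  have e : a = (γ - a) - ((γ - a) - a) := by abel
                  rw [e]; exact Submodule.sub_mem _ hδT0 h0
                exact haa.ne' (horth' _ haT0 _ haspan)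
              · have hδT1 : γ - a ∈ Submodule.span ℝ (T1 : Set V) := by
                  have e : γ - a = ((γ - a) - a) + a := by abel
                  rw [e]; exact Submodule.add_mem _ h1 haspan
                exact (R.ne_zero _ hδroot) (inner_self_eq_zero.1 (horth' _ hδT0 _ hδT1))
          have hγeq : γ = (γ - a) + a := by abel
          rcases hδside with hδ0 | hδ1 <;> rcases haside with ha0 | ha1
          · left
            rw [hγeq]
            exact Submodule.add_mem _ hδ0 (Submodule.subset_span (Finset.mem_coe.2 ha0))
          · exact absurd (mixed S0 S1 hA01 IH hδ0 ha1) (fun h => h)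
          · exact absurd (mixed S1 S0 hA10 (fun ρ hρ h => (IH ρ hρ h).symm) hδ1 ha0) (fun h => h)
          · right
            rw [hγeq]
            exact Submodule.add_mem _ hδ1 (Submodule.subset_span (Finset.mem_coe.2 ha1))
    intro γ hγ
    exact key _ γ hγ (Nat.lt_succ_self _)
  -- irreducibility
  set S : Finset V := R.roots.filter (fun γ => γ ∈ Submodule.span ℝ (S0 : Set V)) with hSdef
  have horthS : ∀ x ∈ S, ∀ y ∈ R.roots, y ∉ S → ⟪x, y⟫ = 0 := by
    intro x hx y hy hyS
    have hxspan : x ∈ Submodule.span ℝ (S0 : Set V) := (Finset.mem_filter.1 hx).2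
    have hyspan : y ∉ Submodule.span ℝ (S0 : Set V) := fun hc =>
      hyS (Finset.mem_filter.2 ⟨hy, hc⟩)
    rcases lt_or_gt_of_ne (hreg y hy) with h | h
    · have hnegy : -y ∈ P := hPmem _ (R.neg_mem y hy) (by rw [map_neg]; linarith)
      rcases hsplit _ hnegy with h0 | h1
      · exact absurd (by simpa using Submodule.neg_mem _ h0) hyspan
      · have := hA01 x hxspan _ h1
        rw [inner_neg_right] at this
        linarith
    · rcases hsplit y (hPmem y hy h) with h0 | h1
      · exact absurd h0 hyspan
      · exact hA01 x hxspan y h1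
  have hθspan : θ ∈ Submodule.span ℝ (S0 : Set V) := by
    rw [← hLθsum]
    exact multiset_sum_mem _ fun x hx =>
      Submodule.subset_span (Finset.mem_coe.2 (Multiset.mem_toFinset.2 hx))
  have hθS : θ ∈ S := Finset.mem_filter.2 ⟨hθroot, hθspan⟩
  rcases R.irreducible S (Finset.filter_subset _ _) horthS with hempty | hall
  · rw [hempty] at hθS
    exact absurd hθS (Finset.notMem_empty θ)
  · have hθsS : θs ∈ S := by rw [hall]; exact hθsroot
    have hθsspan := (Finset.mem_filter.1 hθsS).2
    have hz : ∀ b ∈ (S0 : Set V), ⟪b, θs⟫ = 0 := by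
      have hsum := ms_inner_sum Lθ θs
      rw [hLθsum] at hsum
      have hsum0 : (Lθ.map fun c => ⟪c, θs⟫).sum ≤ 0 := by
        rw [← hsum, ht0]
      have hge : ∀ x ∈ Lθ.map fun c => ⟪c, θs⟫, 0 ≤ x := by
        intro x hx
        obtain ⟨c, hc, rfl⟩ := Multiset.mem_map.1 hx
        have hcΔ := hLθΔ c hc
        have := (hθsdom c (hΔroots c hcΔ) (hPpos c (hΔP c hcΔ))).2
        rw [real_inner_comm]; exact this
      have hzz := ms_all_zero' hge hsum0
      intro b hb
      exact hzz _ (Multiset.mem_map_of_mem _ (Multiset.mem_toFinset.1 (Finset.mem_coe.1 hb)))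
    have := span_inner_zero hz hθsspan
    have h00 : ⟪θs, θs⟫ = 0 := by rwa [real_inner_comm] at this
    exact (R.ne_zero θs hθsroot) (inner_self_eq_zero.1 h00)


end Aux

end Paper

open Paper in
set_option maxHeartbeats 1000000 in
/-- for `p = 2`, if `α` is a positive root with
`s_{θ−θs}(α)` negative and `α ≠ θ−θs`, then `(α,θs) = 0`, `(α,θ) = 1`,
`α` is long, and `⟨α,(θ−θs)^∨⟩ = 2`. -/
theorem inversions_p_two
    {V : Type*} [NormedAddCommGroup V] [InnerProductSpace ℝ V]
    (R : RootSystemData V) (f : V →ₗ[ℝ] ℝ) (θ θs : V)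
    (hreg : R.IsRegular f)
    (h2 : R.TwoLengths) (hlen : ∀ γ ∈ R.roots, ⟪γ, γ⟫ = 1 ∨ ⟪γ, γ⟫ = 2)
    (hθ : R.IsHighestRoot f θ) (hnorm : ⟪θ, θ⟫ = 2)
    (hθs : R.IsHighestShortRoot f θs)
    (α : V) (hα : α ∈ R.roots) (hpos : 0 < f α)
    (hneg : f (refl (θ - θs) α) < 0) (hne : α ≠ θ - θs) :
    ⟪α, θs⟫ = 0 ∧ ⟪α, θ⟫ = 1 ∧ R.IsLongRoot α ∧
    2 * ⟪α, θ - θs⟫ / ⟪θ - θs, θ - θs⟫ = 2 := by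
  have hθroot : θ ∈ R.roots := hθ.1.1
  have hθsroot : θs ∈ R.roots := hθs.1.1
  have hfθ : 0 < f θ := hθ.2.1
  have hfθs : 0 < f θs := hθs.2.1
  have hinner_self_pos : ∀ x : V, x ≠ 0 → 0 < ⟪x, x⟫ := fun x h =>
    lt_of_le_of_ne real_inner_self_nonneg fun hh => h (inner_self_eq_zero.1 hh.symm)
  -- θs has squared length 1
  have hθs1 : ⟪θs, θs⟫ = 1 := by
    obtain ⟨x, hx, y, hy, hxy, -⟩ := h2
    have hshort : ∃ z ∈ R.roots, ⟪z, z⟫ = (1:ℝ) := by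
      rcases hlen x hx with h | h
      · exact ⟨x, hx, h⟩
      · rcases hlen y hy with h' | h'
        · exact ⟨y, hy, h'⟩
        · exact absurd (h.trans h'.symm) hxy
    obtain ⟨z, hz, hz1⟩ := hshort
    have hle := hθs.1.2 z hz
    rcases hlen θs hθsroot with h | h
    · exact h
    · rw [hz1, h] at hle; linarith
  -- ⟪θ, θs⟫ = 1
  have htne : ⟪θ, θs⟫ ≠ 0 := theta_thetas_inner_ne_zero R f hreg hθ hθs
  have htnn : 0 ≤ ⟪θ, θs⟫ := (hθ.2.2 θs hθsroot hfθs).2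
  obtain ⟨kt, hkt⟩ := R.cartan_int θ hθroot θs hθsroot
  have hkt' : (kt : ℝ) = ⟪θ, θs⟫ := by
    rw [hkt, hnorm, real_inner_comm θs θ]; ring
  have hktsq : kt * kt ≤ 2 := by
    have hcs := real_inner_mul_inner_self_le θ θs
    rw [hnorm, hθs1] at hcs
    have : (kt : ℝ) * kt ≤ 2 := by rw [hkt']; linarith
    exact_mod_cast this
  have hkt1 : kt = 1 := by
    have h1 : 1 ≤ kt := by
      have : 0 < (kt : ℝ) := by rw [hkt']; exact lt_of_le_of_ne htnn (Ne.symm htne)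
      have : 0 < kt := by exact_mod_cast this
      omega
    nlinarith
  have ht1 : ⟪θ, θs⟫ = 1 := by rw [← hkt', hkt1]; norm_num
  -- β := θ - θs is a root
  have hβroot : θ - θs ∈ R.roots := by
    have e : Paper.refl θ θs = θs - θ := by
      have e2 : 2 * ⟪θs, θ⟫ / ⟪θ, θ⟫ = 1 := by
        rw [hnorm, real_inner_comm θ θs, ht1]; norm_num
      simp only [Paper.refl]
      rw [e2, one_smul]
    have h1 := R.reflect_mem θ hθroot θs hθsroot
    rw [e] at h1
    have := R.neg_mem _ h1
    rwa [neg_sub] at this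
  have hββ : ⟪θ - θs, θ - θs⟫ = 1 := by
    rw [real_inner_sub_sub_self, hnorm, ht1, hθs1]; norm_num
  have hθsβ : ⟪θs, θ - θs⟫ = 0 := by
    rw [inner_sub_right, real_inner_comm θ θs, ht1, hθs1]; norm_num
  have hip : ⟪α, θ - θs⟫ = ⟪α, θ⟫ - ⟪α, θs⟫ := inner_sub_right α θ θs
  -- f β > 0
  have hfβ : 0 < f (θ - θs) := by
    rcases lt_or_gt_of_ne (hreg _ hβroot) with h | h
    · exfalso
      have hm : θs - θ ∈ R.roots := by
        have := R.neg_mem _ hβroot; rwa [neg_sub] at this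
      have hfm : 0 < f (θs - θ) := by rw [map_sub] at h ⊢; linarith
      have := (hθ.2.2 _ hm hfm).2
      rw [inner_sub_right, hnorm, ht1] at this
      linarith
    · exact h
  -- rewrite hneg
  have hneg' : f α - 2 * (⟪α, θ⟫ - ⟪α, θs⟫) * f (θ - θs) < 0 := by
    have e : Paper.refl (θ - θs) α = α - (2 * (⟪α, θ⟫ - ⟪α, θs⟫)) • (θ - θs) := by
      simp only [Paper.refl]
      rw [hip, hββ, div_one]
    rw [e, map_sub, map_smul, smul_eq_mul] at hneg
    exact hneg
  have hadom : 0 ≤ ⟪α, θ⟫ := by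
    have := (hθ.2.2 α hα hpos).2; rwa [real_inner_comm] at this
  have hbdom : 0 ≤ ⟪α, θs⟫ := by
    have := (hθs.2.2 α hα hpos).2; rwa [real_inner_comm] at this
  have hab : 0 < ⟪α, θ⟫ - ⟪α, θs⟫ := by nlinarith
  have hcsβ : (⟪α, θ⟫ - ⟪α, θs⟫) * (⟪α, θ⟫ - ⟪α, θs⟫) ≤ ⟪α, α⟫ := by
    have := real_inner_mul_inner_self_le α (θ - θs)
    rw [hββ, hip] at this
    linarith
  obtain ⟨ka, hka⟩ := R.cartan_int θ hθroot α hα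
  have hka' : (ka : ℝ) = ⟪α, θ⟫ := by rw [hka, hnorm]; ring
  obtain ⟨kb, hkb⟩ := R.cartan_int θs hθsroot α hα
  have hkb' : (kb : ℝ) = 2 * ⟪α, θs⟫ := by rw [hkb, hθs1]; ring
  rcases hlen α hα with hαα | hαα
  · -- α short: derive a contradiction
    exfalso
    have hm : ((2 * ka - kb : ℤ) : ℝ) = 2 * (⟪α, θ⟫ - ⟪α, θs⟫) := by
      push_cast; rw [hka', hkb']; ring
    have hm1 : 1 ≤ 2 * ka - kb := by
      have : (0 : ℝ) < ((2 * ka - kb : ℤ) : ℝ) := by rw [hm]; linarith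
      have : 0 < 2 * ka - kb := by exact_mod_cast this
      omega
    have hmsq : (2 * ka - kb) * (2 * ka - kb) ≤ 4 := by
      have : ((2 * ka - kb : ℤ) : ℝ) * ((2 * ka - kb : ℤ) : ℝ) ≤ 4 := by
        rw [hm]; nlinarith
      exact_mod_cast this
    have hm12 : 2 * ka - kb = 1 ∨ 2 * ka - kb = 2 := by
      have : 2 * ka - kb ≤ 2 := by nlinarith
      omega
    rcases hm12 with hmv | hmv
    · -- coefficient 1
      have hab2 : 2 * (⟪α, θ⟫ - ⟪α, θs⟫) = 1 := by
        have := hm; rw [hmv] at this; push_cast at this; linarith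
      have e : Paper.refl (θ - θs) α = α - (θ - θs) := by
        simp only [Paper.refl]
        rw [hip, hββ, div_one, hab2, one_smul]
      have hroot2 := R.reflect_mem _ hβroot α hα
      rw [e] at hroot2
      have hneg2 : f (α - (θ - θs)) < 0 := by
        rw [map_sub]; nlinarith
      have hroot3 : (θ - θs) - α ∈ R.roots := by
        have := R.neg_mem _ hroot2; rwa [neg_sub] at this
      have hfpos3 : 0 < f ((θ - θs) - α) := by
        rw [map_sub] at hneg2 ⊢; linarith
      have hdom3 := (hθs.2.2 _ hroot3 hfpos3).2
      rw [inner_sub_right, hθsβ, real_inner_comm α θs] at hdom3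
      have hb0 : ⟪α, θs⟫ = 0 := le_antisymm (by linarith) hbdom
      have hkb0 : kb = 0 := by
        have : (kb : ℝ) = 0 := by rw [hkb', hb0]; ring
        exact_mod_cast this
      omega
    · -- coefficient 2 : α = θ - θs, contradiction
      have hab1 : ⟪α, θ⟫ - ⟪α, θs⟫ = 1 := by
        have := hm; rw [hmv] at this; push_cast at this; linarith
      have hz : ⟪α - (θ - θs), α - (θ - θs)⟫ = 0 := by
        rw [real_inner_sub_sub_self, hαα, hip, hab1, hββ]; norm_num
      exact hne (sub_eq_zero.1 (inner_self_eq_zero.1 hz))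
  · -- α long
    obtain ⟨kb2, hkb2⟩ := R.cartan_int α hα θs hθsroot
    have hkb2' : (kb2 : ℝ) = ⟪α, θs⟫ := by
      rw [hkb2, hαα, real_inner_comm θs α]; ring
    have hn : ((ka - kb2 : ℤ) : ℝ) = ⟪α, θ⟫ - ⟪α, θs⟫ := by
      push_cast; rw [hka', hkb2']
    have hn1 : 1 ≤ ka - kb2 := by
      have : (0 : ℝ) < ((ka - kb2 : ℤ) : ℝ) := by rw [hn]; linarith
      have : 0 < ka - kb2 := by exact_mod_cast this
      omega
    have hnsq : (ka - kb2) * (ka - kb2) ≤ 2 := by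
      have : ((ka - kb2 : ℤ) : ℝ) * ((ka - kb2 : ℤ) : ℝ) ≤ 2 := by
        rw [hn]; nlinarith
      exact_mod_cast this
    have hnv : ka - kb2 = 1 := by nlinarith
    have hab1 : ⟪α, θ⟫ - ⟪α, θs⟫ = 1 := by
      have := hn; rw [hnv] at this; push_cast at this; linarith
    have e : Paper.refl (θ - θs) α = α - (2 : ℝ) • (θ - θs) := by
      simp only [Paper.refl]
      rw [hip, hββ, div_one, hab1]
      norm_num
    have hroot2 := R.reflect_mem _ hβroot α hα
    rw [e] at hroot2
    have hneg2 : f (α - (2 : ℝ) • (θ - θs)) < 0 := by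
      rw [map_sub, map_smul, smul_eq_mul]; nlinarith
    have hroot3 : (2 : ℝ) • (θ - θs) - α ∈ R.roots := by
      have := R.neg_mem _ hroot2; rwa [neg_sub] at this
    have hfpos3 : 0 < f ((2 : ℝ) • (θ - θs) - α) := by
      rw [map_sub, map_smul, smul_eq_mul] at hneg2 ⊢; linarith
    have hdom3 := (hθs.2.2 _ hroot3 hfpos3).2
    rw [inner_sub_right, real_inner_smul_right, hθsβ, real_inner_comm α θs] at hdom3
    have hb0 : ⟪α, θs⟫ = 0 := le_antisymm (by linarith) hbdom
    have ha1 : ⟪α, θ⟫ = 1 := by linarith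
    refine ⟨hb0, ha1, ⟨hα, ?_⟩, ?_⟩
    · intro γ hγ
      rcases hlen γ hγ with h | h <;> rw [hαα, h] <;> norm_num
    · rw [hip, hb0, ha1, hββ]; norm_num
end
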